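/- Under the assumptions of the preceding setting (with $f$ having bounded derivatives up to order three in $(x,u)$, uniformly in $t$), let $z$ solve $z'(t) = \partial_x^2 f(t,x,u)[y,y] + 2\,\partial_x\partial_u f(t,x,u)[y,v] + \partial_u^2 f(t,x,u)[v,v] + \partial_x f(t,x,u) z(t)$ with $z(0)=0$, where $x = x^0$ and $y$ is the first directional derivative of the control-to-state map at $u$ in direction $v$. Then the map $s \mapsto x^s(t)$ is twice differentiable at $s = 0$ with $\frac{d^2}{ds^2} x^s(t)\big|_{s=0} = z(t)$ for each $t \in [0,T]$. -/

import Mathlib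

/-!
Write `x^s(t) = X s t`, `y^s(t) = Y s t`. Unlike `y^s`, the difference quotients
`q(s, h) = (x^{s+h} - x^s) / h` are differentiable in time: they solve the linearized equation
`q' = ∂f(x^s, u + s v)(q, v) + r` with a Taylor remainder `r = O(h)`. Grönwall's inequality gives,
uniformly in time, first `x^σ - x^s = O(σ - s)` and then, applied to differences of quotients,
`q(s, h) - q(σ, h') = O(|s - σ| + |h| + |h'|)`, hence `q(s, h) - y^s = O(h)` and
`x^s - x^0 - s y^0 = O(s²)`. The same argument applied to `q(s, h) - q(0, h) - s z`, whose equation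
is forced by the second-order Taylor remainder of `∂f`, gives `O(s² + |h| + |s h|)`; letting `h → 0`
yields `y^s - y^0 - s z = O(s²)`, so `z` is the derivative of `s ↦ y^s` at `0`.
-/

open Set Filter Topology Asymptotics

section General

variable {E G : Type*} [NormedAddCommGroup E] [NormedAddCommGroup G]

theorem norm_le_of_tendsto_of_norm_le_add {a : ℝ → E} {b : E} {c c' : ℝ}
    (ha : Tendsto a (𝓝[≠] 0) (𝓝 b)) (hle : ∀ h ≠ 0, ‖a h‖ ≤ c + c' * |h|) :
    ‖b‖ ≤ c := by
  have hcont : Continuous (fun h : ℝ => c + c' * |h|) := by fun_prop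
  have hlim : Tendsto (fun h : ℝ => c + c' * |h|) (𝓝[≠] 0) (𝓝 c) :=
    (hcont.tendsto' 0 c (by simp)).mono_left nhdsWithin_le_nhds
  exact le_of_tendsto_of_tendsto ha.norm hlim
    (eventually_nhdsWithin_of_forall fun h hh => hle h hh)

variable [NormedSpace ℝ E] [NormedSpace ℝ G]

theorem gronwallBound_δ0 (K ε x : ℝ) :
    gronwallBound 0 K ε x = ε * gronwallBound 0 K 1 x := by
  rcases eq_or_ne K 0 with rfl | hK
  · simp [gronwallBound_K0]
  · simp only [gronwallBound_of_K_ne_0 hK]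
    ring

theorem gronwallBound_δ0_nonneg {K x : ℝ} (hK : 0 ≤ K) (hx : 0 ≤ x) :
    0 ≤ gronwallBound 0 K 1 x :=
  (gronwallBound_x0 0 K 1).symm.le.trans (gronwallBound_mono le_rfl zero_le_one hK hx)

theorem norm_le_mul_gronwallBound_of_norm_deriv_le {g g' : ℝ → E} {K ε T : ℝ}
    (hK : 0 ≤ K) (hε : 0 ≤ ε) (hg : ∀ t ∈ Icc 0 T, HasDerivAt g (g' t) t) (hg0 : g 0 = 0)
    (bound : ∀ t ∈ Ico 0 T, ‖g' t‖ ≤ K * ‖g t‖ + ε) :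
    ∀ t ∈ Icc 0 T, ‖g t‖ ≤ ε * gronwallBound 0 K 1 T := by
  intro t ht
  have h := norm_le_gronwallBound_of_norm_deriv_right_le (δ := 0)
    (fun x hx => (hg x hx).continuousAt.continuousWithinAt)
    (fun x hx => (hg x (Ico_subset_Icc_self hx)).hasDerivWithinAt) (by simp [hg0]) bound
    t ht
  rw [sub_zero] at h
  calc ‖g t‖ ≤ gronwallBound 0 K ε t := h
    _ ≤ gronwallBound 0 K ε T := gronwallBound_mono le_rfl hε hK ht.2
    _ = ε * gronwallBound 0 K 1 T := gronwallBound_δ0 K ε T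

theorem norm_sub_sub_le_of_lipschitz_fderiv {F : E → G} {D : E → E →L[ℝ] G} {L : ℝ}
    (hF : ∀ p, HasFDerivAt F (D p) p) (hL : 0 ≤ L)
    (hD : ∀ p q, ‖D p - D q‖ ≤ L * ‖p - q‖) (a b : E) :
    ‖F a - F b - D b (a - b)‖ ≤ L * ‖a - b‖ ^ 2 := by
  have h := (convex_closedBall b ‖a - b‖).norm_image_sub_le_of_norm_hasFDerivWithin_le'
    (fun x _ => (hF x).hasFDerivWithinAt)
    (fun x hx => (hD x b).trans (mul_le_mul_of_nonneg_left (mem_closedBall_iff_norm.1 hx) hL))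
    (Metric.mem_closedBall_self (norm_nonneg _)) (mem_closedBall_iff_norm.2 le_rfl)
  rwa [mul_assoc, ← sq] at h

theorem hasDerivAt_of_norm_sub_sub_smul_le_sq {g : ℝ → E} {g' : E} {C : ℝ}
    (h : ∀ s, ‖g s - g 0 - s • g'‖ ≤ C * s ^ 2) : HasDerivAt g g' 0 := by
  refine hasDerivAt_iff_isLittleO.2 ?_
  simp only [sub_zero]
  refine IsBigO.trans_isLittleO (g := fun s : ℝ => s ^ 2) ?_ (isLittleO_pow_id one_lt_two)
  exact IsBigO.of_bound C (Eventually.of_forall fun s => by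
    simpa [Real.norm_eq_abs, abs_of_nonneg (sq_nonneg s)] using h s)

theorem ContinuousLinearMap.norm_apply_mk_zero_le {U : Type*} [NormedAddCommGroup U]
    [NormedSpace ℝ U] (A : E × U →L[ℝ] G) (x : E) : ‖A (x, 0)‖ ≤ ‖A‖ * ‖x‖ := by
  simpa using A.le_opNorm (x, 0)

theorem ContinuousLinearMap.norm_sub_apply_sub_smul_apply_apply_le (D₀ D₁ : E →L[ℝ] G)
    (B : E →L[ℝ] E →L[ℝ] G) (Δ w Q : E) (s : ℝ) :
    ‖(D₁ - D₀) Q - s • B w w‖ ≤ ‖D₁ - D₀ - B Δ‖ * ‖Q‖ + ‖B‖ * ‖Δ - s • w‖ * ‖Q‖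
      + |s| * (‖B‖ * ‖w‖ * ‖Q - w‖) := by
  have e : (D₁ - D₀) Q - s • B w w
      = (D₁ - D₀ - B Δ) Q + B (Δ - s • w) Q + s • B w (Q - w) := by
    simp only [map_sub, map_smul, sub_apply, smul_apply, smul_sub]
    abel
  rw [e]
  refine norm_add₃_le.trans (add_le_add_three (le_opNorm _ _) (le_opNorm₂ _ _ _) ?_)
  rw [norm_smul, Real.norm_eq_abs]
  exact mul_le_mul_of_nonneg_left (le_opNorm₂ _ _ _) (abs_nonneg s)

end General

section StateFamily

def stateControl {E U : Type*} [Add U] [SMul ℝ U] (X : ℝ → ℝ → E) (u v : ℝ → U)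
    (s t : ℝ) : E × U :=
  (X s t, u t + s • v t)

theorem stateControl_zero {E U : Type*} [AddCommGroup U] [Module ℝ U] (X : ℝ → ℝ → E)
    (u v : ℝ → U) (t : ℝ) : stateControl X u v 0 t = (X 0 t, u t) := by
  simp [stateControl]

theorem stateControl_sub {E U : Type*} [AddCommGroup E] [AddCommGroup U] [Module ℝ U]
    (X : ℝ → ℝ → E) (u v : ℝ → U) (σ s t : ℝ) :
    stateControl X u v σ t - stateControl X u v s t = (X σ t - X s t, (σ - s) • v t) := by
  simp [stateControl, sub_smul]

variable {E U : Type*} [NormedAddCommGroup E] [NormedSpace ℝ E] [NormedAddCommGroup U]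
  [NormedSpace ℝ U]

noncomputable def diffQuot (Φ : ℝ → ℝ → E) (s h t : ℝ) : E :=
  h⁻¹ • (Φ (s + h) t - Φ s t)

theorem hasDerivAt_diffQuot {Φ Φ' : ℝ → ℝ → E} {s h t : ℝ}
    (hs : HasDerivAt (Φ s) (Φ' s t) t) (hsh : HasDerivAt (Φ (s + h)) (Φ' (s + h) t) t) :
    HasDerivAt (diffQuot Φ s h) (diffQuot Φ' s h t) t :=
  (hsh.sub hs).const_smul h⁻¹

theorem tendsto_diffQuot {Φ : ℝ → ℝ → E} {Y : E} {s t : ℝ}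
    (hY : HasDerivAt (fun σ => Φ σ t) Y s) :
    Tendsto (fun h => diffQuot Φ s h t) (𝓝[≠] 0) (𝓝 Y) :=
  hasDerivAt_iff_tendsto_slope_zero.1 hY

theorem prod_mk_diffQuot (X : ℝ → ℝ → E) (u v : ℝ → U) {h : ℝ} (hh : h ≠ 0) (s t : ℝ) :
    (diffQuot X s h t, v t)
      = h⁻¹ • (stateControl X u v (s + h) t - stateControl X u v s t) := by
  rw [stateControl_sub, add_sub_cancel_left, Prod.smul_mk, smul_smul, inv_mul_cancel₀ hh,
    one_smul]
  rfl

theorem norm_prod_mk_diffQuot_le {X : ℝ → ℝ → E} {u v : ℝ → U} {A : ℝ} {s h t : ℝ}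
    (hA : ‖stateControl X u v (s + h) t - stateControl X u v s t‖ ≤ A * |h|) (hh : h ≠ 0) :
    ‖(diffQuot X s h t, v t)‖ ≤ A := by
  rw [prod_mk_diffQuot X u v hh, norm_smul, norm_inv, Real.norm_eq_abs]
  calc |h|⁻¹ * _ ≤ |h|⁻¹ * (A * |h|) := by gcongr
    _ = A := by field_simp

theorem norm_prod_mk_le_of_hasDerivAt {X : ℝ → ℝ → E} {u v : ℝ → U} {Y : E} {A s t : ℝ}
    (hY : HasDerivAt (fun σ => X σ t) Y s)
    (hA : ∀ h, ‖stateControl X u v (s + h) t - stateControl X u v s t‖ ≤ A * |h|) :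
    ‖(Y, v t)‖ ≤ A :=
  norm_le_of_tendsto_of_norm_le_add (c' := 0)
    ((tendsto_diffQuot hY).prodMk_nhds tendsto_const_nhds) fun h hh => by
      simpa using norm_prod_mk_diffQuot_le (hA h) hh

structure IsStateFamily (F : ℝ → E × U → E) (D : ℝ → E × U → E × U →L[ℝ] E) (M V T : ℝ)
    (u v : ℝ → U) (X : ℝ → ℝ → E) : Prop where
  nonneg_time : 0 ≤ T
  hasFDerivAt : ∀ t p, HasFDerivAt (F t) (D t p) p
  norm_fderiv_le : ∀ t p, ‖D t p‖ ≤ M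
  fderiv_lipschitz : ∀ t p q, ‖D t p - D t q‖ ≤ M * ‖p - q‖
  norm_direction_le : ∀ t, ‖v t‖ ≤ V
  hasDerivAt : ∀ s, ∀ t ∈ Icc 0 T, HasDerivAt (X s) (F t (stateControl X u v s t)) t
  apply_zero : ∀ s, X s 0 = X 0 0

namespace IsStateFamily

variable {F : ℝ → E × U → E} {D : ℝ → E × U → E × U →L[ℝ] E} {M V T : ℝ} {u v : ℝ → U}
  {X : ℝ → ℝ → E}

theorem bound_nonneg (hS : IsStateFamily F D M V T u v X) : 0 ≤ M :=
  (norm_nonneg _).trans (hS.norm_fderiv_le 0 0)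

theorem gronwallBound_nonneg (hS : IsStateFamily F D M V T u v X) :
    0 ≤ gronwallBound 0 M 1 T :=
  gronwallBound_δ0_nonneg hS.bound_nonneg hS.nonneg_time

theorem hasDerivAt_diffQuot (hS : IsStateFamily F D M V T u v X) (s h : ℝ) {t : ℝ}
    (ht : t ∈ Icc 0 T) :
    HasDerivAt (diffQuot X s h) (diffQuot (fun s t => F t (stateControl X u v s t)) s h t) t :=
  _root_.hasDerivAt_diffQuot (hS.hasDerivAt s t ht) (hS.hasDerivAt (s + h) t ht)

theorem exists_norm_stateControl_sub_le (hS : IsStateFamily F D M V T u v X) :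
    ∃ A ≥ 0, ∀ σ s, ∀ t ∈ Icc 0 T,
      ‖stateControl X u v σ t - stateControl X u v s t‖ ≤ A * |σ - s| := by
  have hM := hS.bound_nonneg
  have hV : 0 ≤ V := (norm_nonneg _).trans (hS.norm_direction_le 0)
  have hB := hS.gronwallBound_nonneg
  have hpair : ∀ σ s t, ‖stateControl X u v σ t - stateControl X u v s t‖
      ≤ ‖X σ t - X s t‖ + V * |σ - s| := fun σ s t => by
    have hdir : ‖(σ - s) • v t‖ ≤ V * |σ - s| := by
      rw [norm_smul, Real.norm_eq_abs, mul_comm]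
      exact mul_le_mul_of_nonneg_right (hS.norm_direction_le t) (abs_nonneg _)
    rw [stateControl_sub, Prod.norm_mk]
    exact max_le (le_add_of_nonneg_right (by positivity))
      (hdir.trans (le_add_of_nonneg_left (norm_nonneg _)))
  have hX : ∀ σ s, ∀ t ∈ Icc 0 T,
      ‖X σ t - X s t‖ ≤ M * V * |σ - s| * gronwallBound 0 M 1 T := by
    intro σ s
    refine norm_le_mul_gronwallBound_of_norm_deriv_le hM (by positivity)
      (fun t ht => (hS.hasDerivAt σ t ht).sub (hS.hasDerivAt s t ht))
      (by simp [hS.apply_zero]) fun t _ => ?_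
    calc ‖F t (stateControl X u v σ t) - F t (stateControl X u v s t)‖
        ≤ M * ‖stateControl X u v σ t - stateControl X u v s t‖ :=
          convex_univ.norm_image_sub_le_of_norm_hasFDerivWithin_le
            (fun p _ => (hS.hasFDerivAt t p).hasFDerivWithinAt)
            (fun p _ => hS.norm_fderiv_le t p) (mem_univ _) (mem_univ _)
      _ ≤ M * ‖X σ t - X s t‖ + M * V * |σ - s| := by
          nlinarith [hpair σ s t]
  refine ⟨M * V * gronwallBound 0 M 1 T + V, by positivity, fun σ s t ht => ?_⟩
  nlinarith [hpair σ s t, hX σ s t ht, abs_nonneg (σ - s)]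

theorem exists_norm_remainder_le (hS : IsStateFamily F D M V T u v X) :
    ∃ R ≥ 0, ∀ s h, h ≠ 0 → ∀ t ∈ Icc 0 T,
      ‖diffQuot (fun s t => F t (stateControl X u v s t)) s h t
        - D t (stateControl X u v s t) (diffQuot X s h t, v t)‖ ≤ R * |h| := by
  obtain ⟨A, -, hA⟩ := hS.exists_norm_stateControl_sub_le
  have hM := hS.bound_nonneg
  refine ⟨M * A ^ 2, by positivity, fun s h hh t ht => ?_⟩
  have hΔ := hA (s + h) s t ht
  rw [add_sub_cancel_left] at hΔ
  have hTaylor := norm_sub_sub_le_of_lipschitz_fderiv (hS.hasFDerivAt t) hM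
    (hS.fderiv_lipschitz t) (stateControl X u v (s + h) t) (stateControl X u v s t)
  rw [prod_mk_diffQuot X u v hh, map_smul, diffQuot, ← smul_sub, norm_smul, norm_inv,
    Real.norm_eq_abs]
  calc |h|⁻¹ * _ ≤ |h|⁻¹ * (M * (A * |h|) ^ 2) := by
        gcongr
        exact hTaylor.trans (by gcongr)
    _ = M * A ^ 2 * |h| := by field_simp

theorem exists_norm_diffQuot_sub_diffQuot_le (hS : IsStateFamily F D M V T u v X) :
    ∃ C ≥ 0, ∀ s σ h h', h ≠ 0 → h' ≠ 0 → ∀ t ∈ Icc 0 T,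
      ‖diffQuot X s h t - diffQuot X σ h' t‖ ≤ C * (|s - σ| + |h| + |h'|) := by
  obtain ⟨A, hA0, hA⟩ := hS.exists_norm_stateControl_sub_le
  obtain ⟨R, hR0, hR⟩ := hS.exists_norm_remainder_le
  have hM := hS.bound_nonneg
  have hB := hS.gronwallBound_nonneg
  refine ⟨(M * A ^ 2 + R) * gronwallBound 0 M 1 T, by positivity,
    fun s σ h h' hh hh' t ht => ?_⟩
  set p := stateControl X u v
  set G := fun s t => F t (p s t)
  refine (norm_le_mul_gronwallBound_of_norm_deriv_le hM
    (ε := M * A ^ 2 * |s - σ| + R * |h| + R * |h'|) (by positivity)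
    (fun τ hτ => (hS.hasDerivAt_diffQuot s h hτ).sub (hS.hasDerivAt_diffQuot σ h' hτ))
    (by simp [diffQuot, hS.apply_zero]) (fun τ hτ => ?_) t ht).trans ?_
  swap
  · have hMA : 0 ≤ M * A ^ 2 := by positivity
    have hε : M * A ^ 2 * |s - σ| + R * |h| + R * |h'|
        ≤ (M * A ^ 2 + R) * (|s - σ| + |h| + |h'|) := by
      nlinarith [mul_nonneg hR0 (abs_nonneg (s - σ)), mul_nonneg hMA (abs_nonneg h),
        mul_nonneg hMA (abs_nonneg h')]
    exact (mul_le_mul_of_nonneg_right hε hB).trans_eq (by ring)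
  have hτ' := Ico_subset_Icc_self hτ
  set Q := (diffQuot X s h τ, v τ)
  set Q' := (diffQuot X σ h' τ, v τ)
  set g := diffQuot X s h τ - diffQuot X σ h' τ
  have hQQ' : (g, (0 : U)) = Q - Q' := by simp [g, Q, Q']
  have hsplit : diffQuot G s h τ - diffQuot G σ h' τ
      = (D τ (p s τ) - D τ (p σ τ)) Q + D τ (p σ τ) (g, 0)
        + ((diffQuot G s h τ - D τ (p s τ) Q) - (diffQuot G σ h' τ - D τ (p σ τ) Q')) := by
    rw [hQQ', map_sub, sub_apply]
    abel
  rw [hsplit]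
  have hDiff : ‖(D τ (p s τ) - D τ (p σ τ)) Q‖ ≤ M * (A * |s - σ|) * A :=
    ((D τ (p s τ) - D τ (p σ τ)).le_opNorm Q).trans <| mul_le_mul_of_nonneg
      ((hS.fderiv_lipschitz τ _ _).trans (by gcongr; exact hA s σ τ hτ'))
      (norm_prod_mk_diffQuot_le (by simpa using hA (s + h) s τ hτ') hh) (norm_nonneg _) hA0
  have hLin := (D τ (p σ τ)).norm_apply_mk_zero_le g
  have hRem := norm_sub_le_of_le (hR s h hh τ hτ') (hR σ h' hh' τ hτ')
  calc _ ≤ _ := norm_add₃_le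
    _ ≤ M * (A * |s - σ|) * A + M * ‖g‖ + (R * |h| + R * |h'|) := by
      gcongr
      exact hLin.trans (by gcongr; exact hS.norm_fderiv_le τ _)
    _ = M * ‖g‖ + (M * A ^ 2 * |s - σ| + R * |h| + R * |h'|) := by ring

section Derivative

variable {Y : ℝ → ℝ → E}

theorem exists_norm_diffQuot_sub_deriv_le (hS : IsStateFamily F D M V T u v X)
    (hY : ∀ s, ∀ t ∈ Icc 0 T, HasDerivAt (fun σ => X σ t) (Y s t) s) :
    ∃ C ≥ 0, ∀ s h, h ≠ 0 → ∀ t ∈ Icc 0 T, ‖diffQuot X s h t - Y s t‖ ≤ C * |h| := by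
  obtain ⟨C, hC0, hC⟩ := hS.exists_norm_diffQuot_sub_diffQuot_le
  refine ⟨C, hC0, fun s h hh t ht => norm_le_of_tendsto_of_norm_le_add (c' := C)
    (tendsto_const_nhds.sub (tendsto_diffQuot (hY s t ht))) fun h' hh' => ?_⟩
  simpa [mul_add] using hC s s h h' hh hh' t ht

theorem exists_norm_sub_sub_smul_deriv_le (hS : IsStateFamily F D M V T u v X)
    (hY : ∀ s, ∀ t ∈ Icc 0 T, HasDerivAt (fun σ => X σ t) (Y s t) s) :
    ∃ C ≥ 0, ∀ s, ∀ t ∈ Icc 0 T, ‖X s t - X 0 t - s • Y 0 t‖ ≤ C * s ^ 2 := by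
  obtain ⟨C, hC0, hC⟩ := hS.exists_norm_diffQuot_sub_deriv_le hY
  refine ⟨C, hC0, fun s t ht => ?_⟩
  rcases eq_or_ne s 0 with rfl | hs
  · simp
  have e : X s t - X 0 t - s • Y 0 t = s • (diffQuot X 0 s t - Y 0 t) := by
    simp [diffQuot, smul_sub, smul_smul, hs]
  rw [e, norm_smul, Real.norm_eq_abs, ← sq_abs s, sq, mul_left_comm]
  gcongr
  exact hC 0 s hs t ht

variable {D2 : ℝ → E × U → E × U →L[ℝ] E × U →L[ℝ] E} {L : ℝ} {z : ℝ → E}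

theorem exists_norm_fderiv_sub_apply_sub_smul_le (hS : IsStateFamily F D M V T u v X)
    (hD : ∀ t p, HasFDerivAt (D t) (D2 t p) p) (hD2 : ∀ t p, ‖D2 t p‖ ≤ M) (hL : 0 ≤ L)
    (hD2L : ∀ t p q, ‖D2 t p - D2 t q‖ ≤ L * ‖p - q‖)
    (hY : ∀ s, ∀ t ∈ Icc 0 T, HasDerivAt (fun σ => X σ t) (Y s t) s) :
    ∃ K ≥ 0, ∀ s h, h ≠ 0 → ∀ t ∈ Icc 0 T,
      ‖(D t (stateControl X u v s t) - D t (X 0 t, u t)) (diffQuot X s h t, v t)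
        - s • D2 t (X 0 t, u t) (Y 0 t, v t) (Y 0 t, v t)‖ ≤ K * (s ^ 2 + |s| * |h|) := by
  obtain ⟨A, hA0, hA⟩ := hS.exists_norm_stateControl_sub_le
  obtain ⟨Cq, hCq0, hCq⟩ := hS.exists_norm_diffQuot_sub_diffQuot_le
  obtain ⟨Cy, hCy0, hCy⟩ := hS.exists_norm_diffQuot_sub_deriv_le hY
  obtain ⟨Cx, hCx0, hCx⟩ := hS.exists_norm_sub_sub_smul_deriv_le hY
  have hM := hS.bound_nonneg
  have ha : 0 ≤ L * A ^ 3 + M * Cx * A + M * A * Cq := by positivity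
  have hb : 0 ≤ M * A * (2 * Cq + Cy) := by positivity
  refine ⟨L * A ^ 3 + M * Cx * A + M * A * Cq + M * A * (2 * Cq + Cy), by positivity,
    fun s h hh t ht => ?_⟩
  set p := stateControl X u v
  set Q := (diffQuot X s h t, v t)
  set w := (Y 0 t, v t)
  have hp0 : p 0 t = (X 0 t, u t) := stateControl_zero X u v t
  have hQ : ‖Q‖ ≤ A := norm_prod_mk_diffQuot_le (by simpa using hA (s + h) s t ht) hh
  have hw : ‖w‖ ≤ A :=
    norm_prod_mk_le_of_hasDerivAt (hY 0 t ht) fun h => by simpa using hA (0 + h) 0 t ht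
  have hΔ : ‖p s t - (X 0 t, u t)‖ ≤ A * |s| := by simpa [hp0] using hA s 0 t ht
  have hTaylor : ‖D t (p s t) - D t (X 0 t, u t) - D2 t (X 0 t, u t) (p s t - (X 0 t, u t))‖
      ≤ L * (A * |s|) ^ 2 :=
    (norm_sub_sub_le_of_lipschitz_fderiv (hD t) hL (hD2L t) _ _).trans (by gcongr)
  have hΔw : ‖p s t - (X 0 t, u t) - s • w‖ ≤ Cx * s ^ 2 := by
    have e : p s t - (X 0 t, u t) - s • w = (X s t - X 0 t - s • Y 0 t, 0) := by
      simp [p, stateControl, w]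
    simpa [e] using hCx s t ht
  have hQw : ‖Q - w‖ ≤ Cq * (|s| + 2 * |h|) + Cy * |h| := by
    have e : Q - w = (diffQuot X s h t - diffQuot X 0 h t + (diffQuot X 0 h t - Y 0 t), 0) := by
      simp [Q, w]
    rw [e, Prod.norm_mk, norm_zero, max_eq_left (norm_nonneg _)]
    refine (norm_add_le _ _).trans (add_le_add ?_ (hCy 0 h hh t ht))
    simpa [two_mul, add_assoc] using hCq s 0 h h hh hh t ht
  have hD2t := hD2 t (X 0 t, u t)
  calc _ ≤ _ := ContinuousLinearMap.norm_sub_apply_sub_smul_apply_apply_le _ _ _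
        (p s t - (X 0 t, u t)) w Q s
    _ ≤ L * (A * |s|) ^ 2 * A + M * (Cx * s ^ 2) * A
          + |s| * (M * A * (Cq * (|s| + 2 * |h|) + Cy * |h|)) := by gcongr
    _ = (L * A ^ 3 + M * Cx * A + M * A * Cq) * s ^ 2
          + M * A * (2 * Cq + Cy) * (|s| * |h|) := by
      linear_combination (L * A ^ 3 + M * A * Cq) * sq_abs s
    _ ≤ _ := by
      nlinarith [mul_nonneg ha (mul_nonneg (abs_nonneg s) (abs_nonneg h)),
        mul_nonneg hb (sq_nonneg s)]

theorem exists_norm_diffQuot_sub_diffQuot_sub_smul_le (hS : IsStateFamily F D M V T u v X)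
    (hD : ∀ t p, HasFDerivAt (D t) (D2 t p) p) (hD2 : ∀ t p, ‖D2 t p‖ ≤ M) (hL : 0 ≤ L)
    (hD2L : ∀ t p q, ‖D2 t p - D2 t q‖ ≤ L * ‖p - q‖)
    (hY : ∀ s, ∀ t ∈ Icc 0 T, HasDerivAt (fun σ => X σ t) (Y s t) s)
    (hz : ∀ t ∈ Icc 0 T, HasDerivAt z
      (D2 t (X 0 t, u t) (Y 0 t, v t) (Y 0 t, v t) + D t (X 0 t, u t) (z t, 0)) t)
    (hz0 : z 0 = 0) :
    ∃ C, ∀ s, ∃ C', ∀ h ≠ 0, ∀ t ∈ Icc 0 T,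
      ‖diffQuot X s h t - diffQuot X 0 h t - s • z t‖ ≤ C * s ^ 2 + C' * |h| := by
  obtain ⟨R, hR0, hR⟩ := hS.exists_norm_remainder_le
  obtain ⟨K, hK0, hK⟩ := hS.exists_norm_fderiv_sub_apply_sub_smul_le hD hD2 hL hD2L hY
  have hM := hS.bound_nonneg
  refine ⟨K * gronwallBound 0 M 1 T, fun s =>
    ⟨(K * |s| + 2 * R) * gronwallBound 0 M 1 T, fun h hh t ht => ?_⟩⟩
  refine (norm_le_mul_gronwallBound_of_norm_deriv_le hM
    (ε := K * (s ^ 2 + |s| * |h|) + 2 * R * |h|) (by positivity)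
    (fun τ hτ => ((hS.hasDerivAt_diffQuot s h hτ).sub (hS.hasDerivAt_diffQuot 0 h hτ)).sub
      ((hz τ hτ).const_smul s))
    (by simp [diffQuot, hS.apply_zero, hz0]) (fun τ hτ => ?_) t ht).trans_eq (by ring)
  have hτ' := Ico_subset_Icc_self hτ
  set p := stateControl X u v
  set G := fun s t => F t (p s t)
  set Q := (diffQuot X s h τ, v τ)
  set Q₀ := (diffQuot X 0 h τ, v τ)
  set w := (Y 0 τ, v τ)
  set g := diffQuot X s h τ - diffQuot X 0 h τ - s • z τ
  have hp0 : p 0 τ = (X 0 τ, u τ) := stateControl_zero X u v τ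
  have hg : (g, (0 : U)) = Q - Q₀ - s • (z τ, 0) := by simp [g, Q, Q₀]
  have hsplit : diffQuot G s h τ - diffQuot G 0 h τ
        - s • (D2 τ (X 0 τ, u τ) w w + D τ (X 0 τ, u τ) (z τ, 0))
      = D τ (X 0 τ, u τ) (g, 0)
        + ((D τ (p s τ) - D τ (X 0 τ, u τ)) Q - s • D2 τ (X 0 τ, u τ) w w)
        + ((diffQuot G s h τ - D τ (p s τ) Q) - (diffQuot G 0 h τ - D τ (p 0 τ) Q₀)) := by
    rw [hg, hp0]
    simp only [map_sub, map_smul, sub_apply, smul_add]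
    abel
  rw [hsplit]
  have hLin := (D τ (X 0 τ, u τ)).norm_apply_mk_zero_le g
  have hRem := norm_sub_le_of_le (hR s h hh τ hτ') (hR 0 h hh τ hτ')
  calc _ ≤ _ := norm_add₃_le
    _ ≤ M * ‖g‖ + K * (s ^ 2 + |s| * |h|) + (R * |h| + R * |h|) := by
      gcongr
      · exact hLin.trans (by gcongr; exact hS.norm_fderiv_le τ _)
      · exact hK s h hh τ hτ'
    _ = M * ‖g‖ + (K * (s ^ 2 + |s| * |h|) + 2 * R * |h|) := by ring

theorem exists_norm_deriv_sub_deriv_sub_smul_le (hS : IsStateFamily F D M V T u v X)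
    (hD : ∀ t p, HasFDerivAt (D t) (D2 t p) p) (hD2 : ∀ t p, ‖D2 t p‖ ≤ M) (hL : 0 ≤ L)
    (hD2L : ∀ t p q, ‖D2 t p - D2 t q‖ ≤ L * ‖p - q‖)
    (hY : ∀ s, ∀ t ∈ Icc 0 T, HasDerivAt (fun σ => X σ t) (Y s t) s)
    (hz : ∀ t ∈ Icc 0 T, HasDerivAt z
      (D2 t (X 0 t, u t) (Y 0 t, v t) (Y 0 t, v t) + D t (X 0 t, u t) (z t, 0)) t)
    (hz0 : z 0 = 0) :
    ∃ C, ∀ s, ∀ t ∈ Icc 0 T, ‖Y s t - Y 0 t - s • z t‖ ≤ C * s ^ 2 := by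
  obtain ⟨C, hC⟩ := hS.exists_norm_diffQuot_sub_diffQuot_sub_smul_le hD hD2 hL hD2L hY hz hz0
  refine ⟨C, fun s t ht => ?_⟩
  obtain ⟨C', hC'⟩ := hC s
  exact norm_le_of_tendsto_of_norm_le_add
    (((tendsto_diffQuot (hY s t ht)).sub (tendsto_diffQuot (hY 0 t ht))).sub tendsto_const_nhds)
    fun h hh => hC' h hh t ht

end Derivative

end IsStateFamily

end StateFamily

theorem control_to_state_second_derivative_general (d m : ℕ) (T : ℝ) (hT : 0 < T)
    (f : ℝ → EuclideanSpace ℝ (Fin d) → EuclideanSpace ℝ (Fin m) → EuclideanSpace ℝ (Fin d))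
    (D : ℝ → (EuclideanSpace ℝ (Fin d) × EuclideanSpace ℝ (Fin m)) →
      (EuclideanSpace ℝ (Fin d) × EuclideanSpace ℝ (Fin m)) →L[ℝ] EuclideanSpace ℝ (Fin d))
    (D2 : ℝ → (EuclideanSpace ℝ (Fin d) × EuclideanSpace ℝ (Fin m)) →
      (EuclideanSpace ℝ (Fin d) × EuclideanSpace ℝ (Fin m)) →L[ℝ]
        (EuclideanSpace ℝ (Fin d) × EuclideanSpace ℝ (Fin m)) →L[ℝ] EuclideanSpace ℝ (Fin d))
    -- f is C² in (x,u) with first derivative D and second derivative D2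
    (hf : ∀ t p, HasFDerivAt (fun q : EuclideanSpace ℝ (Fin d) × EuclideanSpace ℝ (Fin m) =>
      f t q.1 q.2) (D t p) p)
    (hf2 : ∀ t p, HasFDerivAt (D t) (D2 t p) p)
    -- derivatives up to order three bounded (uniformly in t)
    (hDb : ∃ M, ∀ t p, ‖D t p‖ ≤ M ∧ ‖D2 t p‖ ≤ M)
    (hD2lip : ∃ L ≥ (0:ℝ), ∀ t p q, ‖D2 t p - D2 t q‖ ≤ L * ‖p - q‖)
    (u v : ℝ → EuclideanSpace ℝ (Fin m))
    (hvb : ∃ M, ∀ t, ‖v t‖ ≤ M)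
    (x₀ : EuclideanSpace ℝ (Fin d))
    (X : ℝ → ℝ → EuclideanSpace ℝ (Fin d))
    (hX : ∀ s, ∀ t ∈ Set.Icc (0:ℝ) T, HasDerivAt (X s) (f t (X s t) (u t + s • v t)) t)
    (hX0 : ∀ s, X s 0 = x₀)
    -- Y s t = d/ds X s t : first derivative of the control-to-state map
    (Y : ℝ → ℝ → EuclideanSpace ℝ (Fin d))
    (hY : ∀ s, ∀ t ∈ Set.Icc (0:ℝ) T, HasDerivAt (fun σ => X σ t) (Y s t) s)
    -- z solves the second linearized equation, with y = Y 0
    (z : ℝ → EuclideanSpace ℝ (Fin d))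
    (hz : ∀ t ∈ Set.Icc (0:ℝ) T, HasDerivAt z
      (D2 t (X 0 t, u t) (Y 0 t, v t) (Y 0 t, v t) + D t (X 0 t, u t) (z t, 0)) t)
    (hz0 : z 0 = 0) :
    ∀ t ∈ Set.Icc (0:ℝ) T, HasDerivAt (fun s => Y s t) (z t) 0 := by
  obtain ⟨M, hM⟩ := hDb
  obtain ⟨L, hL, hD2L⟩ := hD2lip
  obtain ⟨V, hV⟩ := hvb
  have hS : IsStateFamily (fun t q => f t q.1 q.2) D M V T u v X :=
    { nonneg_time := hT.le
      hasFDerivAt := hf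
      norm_fderiv_le := fun t p => (hM t p).1
      fderiv_lipschitz := fun t p q =>
        convex_univ.norm_image_sub_le_of_norm_hasFDerivWithin_le
          (fun x _ => (hf2 t x).hasFDerivWithinAt) (fun x _ => (hM t x).2) (mem_univ q)
          (mem_univ p)
      norm_direction_le := hV
      hasDerivAt := hX
      apply_zero := fun s => (hX0 s).trans (hX0 0).symm }
  obtain ⟨C, hC⟩ :=
    hS.exists_norm_deriv_sub_deriv_sub_smul_le hf2 (fun t p => (hM t p).2) hL hD2L hY hz hz0
  exact fun t ht => hasDerivAt_of_norm_sub_sub_smul_le_sq fun s => hC s t ht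

/-- Second-order directional differentiability of the control-to-state map
(Lemma A.2): the map `s ↦ x^s(t)` is twice differentiable at `s = 0` with
second derivative `z(t)`, where `z` solves the second linearized equation. -/
theorem control_to_state_second_derivative (d m : ℕ) (T : ℝ) (hT : 0 < T)
    (f : ℝ → EuclideanSpace ℝ (Fin d) → EuclideanSpace ℝ (Fin m) → EuclideanSpace ℝ (Fin d))
    (D : ℝ → (EuclideanSpace ℝ (Fin d) × EuclideanSpace ℝ (Fin m)) →
      (EuclideanSpace ℝ (Fin d) × EuclideanSpace ℝ (Fin m)) →L[ℝ] EuclideanSpace ℝ (Fin d))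
    (D2 : ℝ → (EuclideanSpace ℝ (Fin d) × EuclideanSpace ℝ (Fin m)) →
      (EuclideanSpace ℝ (Fin d) × EuclideanSpace ℝ (Fin m)) →L[ℝ]
        (EuclideanSpace ℝ (Fin d) × EuclideanSpace ℝ (Fin m)) →L[ℝ] EuclideanSpace ℝ (Fin d))
    -- f is C² in (x,u) with first derivative D and second derivative D2
    (hf : ∀ t p, HasFDerivAt (fun q : EuclideanSpace ℝ (Fin d) × EuclideanSpace ℝ (Fin m) =>
      f t q.1 q.2) (D t p) p)
    (hf2 : ∀ t p, HasFDerivAt (D t) (D2 t p) p)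
    -- derivatives up to order three bounded (uniformly in t)
    (hDb : ∃ M, ∀ t p, ‖D t p‖ ≤ M ∧ ‖D2 t p‖ ≤ M)
    (hD2lip : ∃ L ≥ (0:ℝ), ∀ t p q, ‖D2 t p - D2 t q‖ ≤ L * ‖p - q‖)
    (u v : ℝ → EuclideanSpace ℝ (Fin m))
    (hu : Measurable u) (hv : Measurable v)
    (hub : ∃ M, ∀ t, ‖u t‖ ≤ M) (hvb : ∃ M, ∀ t, ‖v t‖ ≤ M)
    (x₀ : EuclideanSpace ℝ (Fin d))
    (X : ℝ → ℝ → EuclideanSpace ℝ (Fin d))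
    (hX : ∀ s, ∀ t ∈ Set.Icc (0:ℝ) T, HasDerivAt (X s) (f t (X s t) (u t + s • v t)) t)
    (hX0 : ∀ s, X s 0 = x₀)
    -- Y s t = d/ds X s t : first derivative of the control-to-state map
    (Y : ℝ → ℝ → EuclideanSpace ℝ (Fin d))
    (hY : ∀ s, ∀ t ∈ Set.Icc (0:ℝ) T, HasDerivAt (fun σ => X σ t) (Y s t) s)
    -- z solves the second linearized equation, with y = Y 0
    (z : ℝ → EuclideanSpace ℝ (Fin d))
    (hz : ∀ t ∈ Set.Icc (0:ℝ) T, HasDerivAt z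
      (D2 t (X 0 t, u t) (Y 0 t, v t) (Y 0 t, v t) + D t (X 0 t, u t) (z t, 0)) t)
    (hz0 : z 0 = 0) :
    ∀ t ∈ Set.Icc (0:ℝ) T, HasDerivAt (fun s => Y s t) (z t) 0 :=
  control_to_state_second_derivative_general d m T hT f D D2 hf hf2 hDb hD2lip u v hvb x₀ X hX hX0 Y
    hY z hz hz0
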